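/- arXiv:2408.12016 — 3 statements merged into one kernel-verified Lean document; each statement's English description precedes it below -/
import Mathlib

section
/- Let κ ∈ (0,1), N_S > 0 and N_B ≥ 0, and set a = κ(N_S + 1/2) + (1−κ)(N_B + 1/2), b = N_S + 1/2, c = √(κ·N_S(N_S+1)). Let Σ be the real symmetric 4×4 matrix with rows [a,0,c,0], [0,a,0,−c], [c,0,b,0], [0,−c,0,b]. Then Σ − (1/2)·I₄ is positive semidefinite if and only if N_B ≥ κ/(1−κ). -/
/-!
Writing `A = a - 1/2`, `B = b - 1/2`, the matrix `Σ - I/2` acts on the quadrature pairs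
`(x₀, x₂)` and `(x₁, -x₃)` by the same binary form `A u² + 2c u v + B v²`, so it is positive
semidefinite exactly when `A, B ≥ 0` and `c² ≤ A B`. Here `B = N_S` and
`A B - c² = N_S ((1 - κ) N_B - κ)`, which is nonnegative iff `N_B ≥ κ / (1 - κ)`.
-/

open Matrix

theorem binary_quadratic_nonneg_iff {K : Type*} [Field K] [LinearOrder K] [IsStrictOrderedRing K]
    {A B C : K} :
    (∀ u v : K, 0 ≤ A * u ^ 2 + 2 * C * u * v + B * v ^ 2) ↔ 0 ≤ A ∧ 0 ≤ B ∧ C ^ 2 ≤ A * B := by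
  constructor
  · intro h
    refine ⟨by simpa using h 1 0, by simpa using h 0 1, ?_⟩
    have hdisc : discrim A (2 * C) B ≤ 0 :=
      discrim_le_zero fun u => by simpa [sq] using h u 1
    rw [discrim] at hdisc
    linarith
  · rintro ⟨hA, hB, hC⟩ u v
    rcases hA.eq_or_lt with rfl | hA
    · obtain rfl : C = 0 := pow_eq_zero_iff two_ne_zero |>.1 (by nlinarith [sq_nonneg C])
      simpa using mul_nonneg hB (sq_nonneg v)
    · have hsq : (A * u ^ 2 + 2 * C * u * v + B * v ^ 2) * A
          = (A * u + C * v) ^ 2 + (A * B - C ^ 2) * v ^ 2 := by ring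
      refine nonneg_of_mul_nonneg_left ?_ hA
      rw [hsq]
      exact add_nonneg (sq_nonneg _) (mul_nonneg (sub_nonneg.2 hC) (sq_nonneg v))

/-- Two-mode covariance matrix in standard form, quadratures ordered `(q₁, p₁, q₂, p₂)`. -/
def twoModeCovariance (A B C : ℝ) : Matrix (Fin 4) (Fin 4) ℝ :=
  !![A, 0, C, 0; 0, A, 0, -C; C, 0, B, 0; 0, -C, 0, B]

namespace twoModeCovariance

variable (A B C : ℝ)

theorem sub_smul_one (r : ℝ) :
    twoModeCovariance A B C - r • 1 = twoModeCovariance (A - r) (B - r) C := by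
  ext i j
  fin_cases i <;> fin_cases j <;> simp [twoModeCovariance, one_apply]

theorem isHermitian : (twoModeCovariance A B C).IsHermitian := by
  ext i j
  fin_cases i <;> fin_cases j <;> simp [twoModeCovariance]

theorem dotProduct_mulVec (x : Fin 4 → ℝ) :
    star x ⬝ᵥ (twoModeCovariance A B C *ᵥ x)
      = (A * x 0 ^ 2 + 2 * C * x 0 * x 2 + B * x 2 ^ 2)
        + (A * x 1 ^ 2 + 2 * C * x 1 * (-x 3) + B * (-x 3) ^ 2) := by
  simp only [dotProduct, Pi.star_apply, star_trivial, mulVec, twoModeCovariance, of_apply,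
    cons_val', cons_val_fin_one, Fin.sum_univ_four, cons_val_zero, cons_val_one, cons_val]
  ring

theorem posSemidef_iff :
    (twoModeCovariance A B C).PosSemidef ↔ 0 ≤ A ∧ 0 ≤ B ∧ C ^ 2 ≤ A * B := by
  rw [posSemidef_iff_dotProduct_mulVec, ← binary_quadratic_nonneg_iff]
  refine ⟨fun ⟨_, h⟩ u v => ?_, fun h => ⟨isHermitian A B C, fun x => ?_⟩⟩
  · have huv := h ![u, 0, v, 0]
    rw [dotProduct_mulVec] at huv
    simpa using huv
  · rw [dotProduct_mulVec]
    exact add_nonneg (h _ _) (h _ _)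

end twoModeCovariance

theorem tmss_attenuator_classicality_general (κ NS NB : ℝ) (hκ : κ ∈ Set.Ioo (0 : ℝ) 1)
    (hNS : 0 < NS)
    (a b c : ℝ)
    (ha : a = κ * (NS + 1/2) + (1 - κ) * (NB + 1/2))
    (hb : b = NS + 1/2)
    (hc : c = Real.sqrt (κ * NS * (NS + 1)))
    (S : Matrix (Fin 4) (Fin 4) ℝ)
    (hS : S = !![a, 0, c, 0; 0, a, 0, -c; c, 0, b, 0; 0, -c, 0, b]) :
    (S - (1/2 : ℝ) • (1 : Matrix (Fin 4) (Fin 4) ℝ)).PosSemidef ↔ NB ≥ κ / (1 - κ) := by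
  obtain ⟨hκ0, hκ1⟩ := hκ
  have hc2 : c ^ 2 = κ * NS * (NS + 1) := by rw [hc, Real.sq_sqrt (by positivity)]
  have hgap : (a - 1/2) * (b - 1/2) - c ^ 2 = NS * ((1 - κ) * NB - κ) := by
    rw [ha, hb, hc2]; ring
  rw [show S = twoModeCovariance a b c from hS, twoModeCovariance.sub_smul_one,
    twoModeCovariance.posSemidef_iff, ge_iff_le, div_le_iff₀ (sub_pos.2 hκ1)]
  constructor
  · rintro ⟨-, -, hdet⟩
    have : 0 ≤ (1 - κ) * NB - κ := nonneg_of_mul_nonneg_right (by linarith) hNS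
    linarith
  · intro hκNB
    have hdet : 0 ≤ NS * ((1 - κ) * NB - κ) := mul_nonneg hNS.le (by linarith)
    exact ⟨by rw [ha]; nlinarith, by rw [hb]; linarith, by linarith⟩

/-- For `κ ∈ (0,1)`, `N_S > 0`, `N_B ≥ 0`, with
`a = κ(N_S+1/2)+(1−κ)(N_B+1/2)`, `b = N_S+1/2`, `c = √(κ N_S(N_S+1))`, the covariance
matrix `S` with rows `[a,0,c,0],[0,a,0,−c],[c,0,b,0],[0,−c,0,b]` satisfies:
`S − (1/2)·I₄` is positive semidefinite if and only if `N_B ≥ κ/(1−κ)`. -/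
theorem tmss_attenuator_classicality (κ NS NB : ℝ) (hκ : κ ∈ Set.Ioo (0 : ℝ) 1)
    (hNS : 0 < NS) (hNB : 0 ≤ NB)
    (a b c : ℝ)
    (ha : a = κ * (NS + 1/2) + (1 - κ) * (NB + 1/2))
    (hb : b = NS + 1/2)
    (hc : c = Real.sqrt (κ * NS * (NS + 1)))
    (S : Matrix (Fin 4) (Fin 4) ℝ)
    (hS : S = !![a, 0, c, 0; 0, a, 0, -c; c, 0, b, 0; 0, -c, 0, b]) :
    (S - (1/2 : ℝ) • (1 : Matrix (Fin 4) (Fin 4) ℝ)).PosSemidef ↔ NB ≥ κ / (1 - κ) :=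
  tmss_attenuator_classicality_general κ NS NB hκ hNS a b c ha hb hc S hS
end

section
/- Let κ ∈ (0,1), N_S > 0 and N_B ≥ 0, and set a = κ(N_S + 1/2) + (1−κ)(N_B + 1/2), b = N_S + 1/2, c² = κ·N_S(N_S+1). Then the inequality a² + b² + 2c² ≤ 4(ab − c²)² + 1/4 holds if and only if N_B ≥ κ/(1−κ). -/
/-- For `κ ∈ (0,1)`, `N_S > 0`, `N_B ≥ 0`, with `a = κ(N_S+1/2)+(1−κ)(N_B+1/2)`,
`b = N_S+1/2`, `c² = κ N_S(N_S+1)`, the separability inequality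
`a² + b² + 2c² ≤ 4(ab − c²)² + 1/4` holds if and only if `N_B ≥ κ/(1−κ)`. -/
theorem tmss_attenuator_separability (κ NS NB : ℝ) (hκ : κ ∈ Set.Ioo (0 : ℝ) 1)
    (hNS : 0 < NS) (hNB : 0 ≤ NB)
    (a b c2 : ℝ)
    (ha : a = κ * (NS + 1/2) + (1 - κ) * (NB + 1/2))
    (hb : b = NS + 1/2)
    (hc2 : c2 = κ * NS * (NS + 1)) :
    a^2 + b^2 + 2 * c2 ≤ 4 * (a * b - c2)^2 + 1/4 ↔ NB ≥ κ / (1 - κ) := by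
  obtain ⟨hκ0, hκ1⟩ := hκ
  have hk1 : 0 < 1 - κ := by linarith
  subst ha hb hc2
  have hNS1 : 0 < NS * (NS + 1) := by nlinarith
  have hpos : 0 < (1 - κ) * NB + 1 := by nlinarith
  have key : 4 * ((κ * (NS + 1/2) + (1 - κ) * (NB + 1/2)) * (NS + 1/2)
        - κ * NS * (NS + 1))^2 + 1/4
      - ((κ * (NS + 1/2) + (1 - κ) * (NB + 1/2))^2 + (NS + 1/2)^2
        + 2 * (κ * NS * (NS + 1)))
      = 4 * (NS * (NS + 1)) * (((1 - κ) * NB - κ) * ((1 - κ) * NB + 1)) := by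
    ring
  rw [ge_iff_le, div_le_iff₀ hk1]
  constructor
  · intro h
    nlinarith [mul_pos hNS1 hpos]
  · intro h
    nlinarith [mul_nonneg (mul_nonneg (by nlinarith : (0:ℝ) ≤ 4 * (NS * (NS + 1)))
      (by linarith : (0:ℝ) ≤ (1 - κ) * NB - κ)) hpos.le]
end

section
/- Let N_S > 0 and N_B = 0. For F₁(κ) = N_S(1 + (1−κ)N_S) / (κ(1−κ)(2 + (2−κ)N_S)) and F_TMSS(κ) = N_S/(κ(1−κ)) defined on κ ∈ (0,1), the limit as κ → 0⁺ of the ratio F₁(κ)/F_TMSS(κ) equals 1/2. -/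
open Filter Topology

/-- For `N_S > 0` at zero thermal background, with
`F₁(κ) = N_S(1+(1−κ)N_S)/(κ(1−κ)(2+(2−κ)N_S))` and `F_TMSS(κ) = N_S/(κ(1−κ))` on
`κ ∈ (0,1)`, the ratio `F₁(κ)/F_TMSS(κ) → 1/2` as `κ → 0⁺`. -/
theorem model1_half_of_tmss (NS : ℝ) (hNS : 0 < NS) :
    Tendsto (fun κ : ℝ =>
        (NS * (1 + (1 - κ) * NS) / (κ * (1 - κ) * (2 + (2 - κ) * NS))) /
          (NS / (κ * (1 - κ))))
      (nhdsWithin 0 (Set.Ioo (0 : ℝ) 1))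
      (nhds (1 / 2)) := by
  have heq : (fun κ : ℝ =>
        (NS * (1 + (1 - κ) * NS) / (κ * (1 - κ) * (2 + (2 - κ) * NS))) /
          (NS / (κ * (1 - κ)))) =ᶠ[nhdsWithin 0 (Set.Ioo (0 : ℝ) 1)]
      (fun κ : ℝ => (1 + (1 - κ) * NS) / (2 + (2 - κ) * NS)) := by
    filter_upwards [self_mem_nhdsWithin] with κ hκ
    obtain ⟨h0, h1⟩ := hκ
    have hκ0 : κ ≠ 0 := ne_of_gt h0
    have h1κ : (1 : ℝ) - κ ≠ 0 := by linarith
    have hden : 2 + (2 - κ) * NS ≠ 0 := by nlinarith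
    field_simp
  rw [Filter.tendsto_congr' heq]
  have hc : ContinuousAt (fun κ : ℝ => (1 + (1 - κ) * NS) / (2 + (2 - κ) * NS)) 0 := by
    apply ContinuousAt.div (by fun_prop) (by fun_prop)
    simp; nlinarith
  have := hc.continuousWithinAt (s := Set.Ioo (0 : ℝ) 1)
  have hval : (1 + (1 - (0:ℝ)) * NS) / (2 + (2 - (0:ℝ)) * NS) = 1 / 2 := by
    rw [div_eq_div_iff (by nlinarith) (by norm_num)]; ring
  simp only [ContinuousWithinAt] at this
  rw [hval] at this
  exact this
end
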